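/- arXiv:2301.12065 — 3 statements merged into one kernel-verified Lean document; each statement's English description precedes it below -/
import Mathlib

section
/- Let D ≥ 1, let ω be a random vector distributed according to the standard Gaussian measure on ℝ^D, and let x, y ∈ ℝ^D be nonzero. Then ℙ( ⟨ω, x⟩ ≥ 0 and ⟨ω, y⟩ ≥ 0 ) = 1/2 − arccos( ⟨x,y⟩/(‖x‖·‖y‖) )/(2π). Consequently, if ω_1,…,ω_P are i.i.d. standard Gaussian vectors in ℝ^D and a(x) ∈ {0,1}^P is the associated sign feature, then E[⟨a(x), a(y)⟩] = P·(1/2 − φ(x,y)/(2π)) and E[ π·(1 − (2/P)·⟨a(x), a(y)⟩) ] = φ(x,y). -/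
open MeasureTheory ProbabilityTheory

/-- The standard Gaussian measure on `ℝ^D`, the `D`-fold product of `N(0,1)`. -/
noncomputable def stdGaussian (D : ℕ) : Measure (Fin D → ℝ) :=
  Measure.pi fun _ => gaussianReal 0 1

/-- Euclidean inner product on `ℝ^D`. -/
def dotp {D : ℕ} (x y : Fin D → ℝ) : ℝ := ∑ d, x d * y d

/-- Euclidean norm on `ℝ^D`. -/
noncomputable def nrm {D : ℕ} (x : Fin D → ℝ) : ℝ := Real.sqrt (dotp x x)

/-- The angle `φ(x,y) = arccos(⟨x,y⟩/(‖x‖‖y‖))`. -/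
noncomputable def angleφ {D : ℕ} (x y : Fin D → ℝ) : ℝ :=
  Real.arccos (dotp x y / (nrm x * nrm y))

/-- The sign feature `a(x) ∈ {0,1}^P` given hyperplane directions `ω_1,…,ω_P`. -/
noncomputable def signFeat {D P : ℕ} (ω : Fin P → Fin D → ℝ) (x : Fin D → ℝ) :
    Fin P → ℝ :=
  fun ℓ => if 0 ≤ dotp (ω ℓ) x then 1 else 0

/-!
The law of `(⟪ω, x⟫, ⟪ω, y⟫)` under a standard Gaussian `ω` is a centred Gaussian law on `ℝ²`,
so it depends only on the Gram matrix of `x, y`; hence we may replace `x, y` by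
`‖x‖ • (1, 0)` and `‖y‖ • (cos φ, sin φ)` in the plane. There the event is a wedge of opening
`π - φ`. In polar coordinates the Gaussian density is radial, so the measure of a cone is the
radial mass times the length of its arc of angles, and the radial mass is `1 / (2π)` because the
whole plane has measure `1`. This gives `(π - φ) / (2π)`. The expectations follow by linearity,
each `ω_ℓ` being a standard Gaussian vector.
-/

open Real Set InnerProductGeometry
open WithLp (toLp)
open scoped RealInnerProductSpace ENNReal

section InnerPair

variable {E : Type*} [NormedAddCommGroup E] [InnerProductSpace ℝ E]

noncomputable def innerPair (u v : E) : E →L[ℝ] ℝ × ℝ := (innerSL ℝ u).prod (innerSL ℝ v)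

@[simp]
lemma innerPair_apply (u v ω : E) : innerPair u v ω = (⟪u, ω⟫, ⟪v, ω⟫) := rfl

lemma comp_innerPair (L : StrongDual ℝ (ℝ × ℝ)) (u v : E) :
    L.comp (innerPair u v) = innerSL ℝ (L (1, 0) • u + L (0, 1) • v) := by
  ext ω
  have hω : ((⟪u, ω⟫, ⟪v, ω⟫) : ℝ × ℝ) = ⟪u, ω⟫ • (1, 0) + ⟪v, ω⟫ • (0, 1) := by simp
  simp only [ContinuousLinearMap.comp_apply, innerPair_apply, hω, map_add, map_smul, add_apply,
    smul_apply, innerSL_apply_apply, smul_eq_mul]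
  ring

lemma norm_smul_add_smul_sq (a b : ℝ) (u v : E) :
    ‖a • u + b • v‖ ^ 2 = a ^ 2 * ‖u‖ ^ 2 + 2 * (a * b) * ⟪u, v⟫ + b ^ 2 * ‖v‖ ^ 2 := by
  rw [norm_add_sq_real, norm_smul, norm_smul, real_inner_smul_left, real_inner_smul_right,
    mul_pow, mul_pow, Real.norm_eq_abs, Real.norm_eq_abs, sq_abs, sq_abs]
  ring

variable {F : Type*} [NormedAddCommGroup F] [InnerProductSpace ℝ F]
  [FiniteDimensional ℝ E] [MeasurableSpace E] [BorelSpace E]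
  [FiniteDimensional ℝ F] [MeasurableSpace F] [BorelSpace F]

lemma map_innerPair_stdGaussian {u v : E} {u' v' : F} (hu : ‖u‖ = ‖u'‖) (hv : ‖v‖ = ‖v'‖)
    (huv : ⟪u, v⟫ = ⟪u', v'⟫) :
    (ProbabilityTheory.stdGaussian E).map (innerPair u v) =
      (ProbabilityTheory.stdGaussian F).map (innerPair u' v') := by
  refine Measure.ext_of_charFunDual (funext fun L => ?_)
  have hnorm : ‖L (1, 0) • u + L (0, 1) • v‖ = ‖L (1, 0) • u' + L (0, 1) • v'‖ := by
    rw [← sq_eq_sq₀ (norm_nonneg _) (norm_nonneg _), norm_smul_add_smul_sq,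
      norm_smul_add_smul_sq, hu, hv, huv]
  rw [charFunDual_map, charFunDual_map, charFunDual_stdGaussian, charFunDual_stdGaussian,
    comp_innerPair, comp_innerPair, innerSL_apply_norm, innerSL_apply_norm, hnorm]

end InnerPair

noncomputable def gaussianPDF₂ (p : ℝ × ℝ) : ℝ≥0∞ :=
  ENNReal.ofReal ((2 * π)⁻¹ * exp (-(p.1 ^ 2 + p.2 ^ 2) / 2))

lemma gaussianReal_prod_eq_withDensity :
    (gaussianReal 0 1).prod (gaussianReal 0 1) = volume.withDensity gaussianPDF₂ := by
  rw [gaussianReal_of_var_ne_zero 0 one_ne_zero, prod_withDensity (measurable_gaussianPDF 0 1)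
    (measurable_gaussianPDF 0 1), ← Measure.volume_eq_prod]
  congr with p
  rw [gaussianPDF, gaussianPDF, ← ENNReal.ofReal_mul (gaussianPDFReal_nonneg _ _ _),
    gaussianPDF₂, gaussianPDFReal, gaussianPDFReal]
  congr 1
  have h2π : (2 * π)⁻¹ = (√(2 * π))⁻¹ * (√(2 * π))⁻¹ := by
    rw [← mul_inv, Real.mul_self_sqrt (by positivity)]
  simp only [NNReal.coe_one, mul_one, sub_zero]
  rw [h2π, neg_add, add_div, exp_add]
  ring

lemma gaussianPDF₂_polarCoord_symm (r θ : ℝ) :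
    gaussianPDF₂ (polarCoord.symm (r, θ)) = ENNReal.ofReal ((2 * π)⁻¹ * exp (-r ^ 2 / 2)) := by
  rw [polarCoord_symm_apply, gaussianPDF₂]
  congr 4
  linear_combination (-r ^ 2) * sin_sq_add_cos_sq θ

lemma gaussianReal_prod_cone {W : Set (ℝ × ℝ)} {A : Set ℝ} (hW : MeasurableSet W)
    (hA : MeasurableSet A) (hcone : ∀ r > 0, ∀ θ, (r * cos θ, r * sin θ) ∈ W ↔ θ ∈ A) :
    (gaussianReal 0 1).prod (gaussianReal 0 1) W =
      (∫⁻ r in Ioi 0, ENNReal.ofReal (r * ((2 * π)⁻¹ * exp (-r ^ 2 / 2)))) *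
        volume (A ∩ Ioo (-π) π) := by
  have hpolar : ∀ p ∈ polarCoord.target,
      ENNReal.ofReal p.1 • W.indicator gaussianPDF₂ (polarCoord.symm p) =
        ENNReal.ofReal (p.1 * ((2 * π)⁻¹ * exp (-p.1 ^ 2 / 2))) * A.indicator 1 p.2 := by
    rintro ⟨r, θ⟩ ⟨hr, -⟩
    by_cases hθ : θ ∈ A
    · have hW' : polarCoord.symm (r, θ) ∈ W := by
        rw [polarCoord_symm_apply]; exact (hcone r hr θ).2 hθ
      rw [indicator_of_mem hW', indicator_of_mem hθ, gaussianPDF₂_polarCoord_symm, smul_eq_mul,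
        ← ENNReal.ofReal_mul (le_of_lt hr), Pi.one_apply, mul_one]
    · have hW' : polarCoord.symm (r, θ) ∉ W := by
        rw [polarCoord_symm_apply]; exact fun h => hθ ((hcone r hr θ).1 h)
      rw [indicator_of_notMem hW', indicator_of_notMem hθ, smul_zero, mul_zero]
  rw [gaussianReal_prod_eq_withDensity, withDensity_apply _ hW, ← lintegral_indicator hW,
    ← lintegral_comp_polarCoord_symm,
    setLIntegral_congr_fun polarCoord.open_target.measurableSet hpolar, polarCoord_target,
    Measure.volume_eq_prod, ← Measure.prod_restrict,
    lintegral_prod_mul (f := fun r => ENNReal.ofReal (r * ((2 * π)⁻¹ * exp (-r ^ 2 / 2))))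
      (g := A.indicator 1) (by fun_prop) (measurable_one.indicator hA).aemeasurable,
    lintegral_indicator_one hA, Measure.restrict_apply hA]

lemma abs_le_pi_div_two_of_cos_nonneg {t : ℝ} (hcos : 0 ≤ cos t) (hl : -(3 * π / 2) < t)
    (hu : t < 3 * π / 2) : |t| ≤ π / 2 := by
  refine abs_le.2 ⟨?_, ?_⟩ <;> by_contra! h
  · have := cos_neg_of_pi_div_two_lt_of_lt (x := -t) (by linarith) (by linarith)
    rw [cos_neg] at this
    linarith
  · linarith [cos_neg_of_pi_div_two_lt_of_lt h (by linarith)]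

lemma volume_planarWedge_angles {φ : ℝ} (hφ0 : 0 ≤ φ) (hφπ : φ ≤ π) :
    volume ({θ | 0 ≤ cos θ ∧ 0 ≤ cos (θ - φ)} ∩ Ioo (-π) π) = ENNReal.ofReal (π - φ) := by
  -- The angles form `Icc (φ - π / 2) (π / 2)`, plus the point `-π / 2` when `φ = π`.
  have hvol : volume (Icc (φ - π / 2) (π / 2)) = ENNReal.ofReal (π - φ) := by
    rw [volume_Icc]; ring_nf
  refine le_antisymm ?_ (hvol ▸ measure_mono ?_)
  · have hsub : {θ | 0 ≤ cos θ ∧ 0 ≤ cos (θ - φ)} ∩ Ioo (-π) π ⊆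
        Icc (φ - π / 2) (π / 2) ∪ {φ - 3 * π / 2} := by
      rintro θ ⟨⟨hθ, hθφ⟩, hl, hu⟩
      have hθ' := abs_le.1 (abs_le_pi_div_two_of_cos_nonneg hθ (by linarith) (by linarith))
      rcases eq_or_lt_of_le (show -(3 * π / 2) ≤ θ - φ by linarith) with h | h
      · right; rw [mem_singleton_iff]; linarith
      · have := abs_le.1 (abs_le_pi_div_two_of_cos_nonneg hθφ h (by linarith))
        left; constructor <;> linarith
    calc _ ≤ volume (Icc (φ - π / 2) (π / 2) ∪ {φ - 3 * π / 2}) := measure_mono hsub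
      _ ≤ volume (Icc (φ - π / 2) (π / 2)) + volume {φ - 3 * π / 2} := measure_union_le _ _
      _ = ENNReal.ofReal (π - φ) := by rw [hvol, volume_singleton, add_zero]
  · rintro θ ⟨hl, hu⟩
    have := pi_pos
    exact ⟨⟨cos_nonneg_of_neg_pi_div_two_le_of_le (by linarith) hu,
      cos_nonneg_of_neg_pi_div_two_le_of_le (by linarith) (by linarith)⟩, by linarith, by linarith⟩

def planarWedge (φ : ℝ) : Set (ℝ × ℝ) := {p | 0 ≤ p.1 ∧ 0 ≤ cos φ * p.1 + sin φ * p.2}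

lemma measurableSet_planarWedge (φ : ℝ) : MeasurableSet (planarWedge φ) :=
  (measurableSet_le measurable_const measurable_fst).inter
    (measurableSet_le measurable_const
      ((measurable_fst.const_mul (cos φ)).add (measurable_snd.const_mul (sin φ))))

lemma gaussianReal_prod_planarWedge {φ : ℝ} (hφ0 : 0 ≤ φ) (hφπ : φ ≤ π) :
    (gaussianReal 0 1).prod (gaussianReal 0 1) (planarWedge φ) =
      ENNReal.ofReal (1 / 2 - φ / (2 * π)) := by
  have hπ := pi_pos
  -- The radial mass is read off from the total mass `1`, without computing it.
  have hR : ∫⁻ r in Ioi 0, ENNReal.ofReal (r * ((2 * π)⁻¹ * exp (-r ^ 2 / 2))) =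
      (ENNReal.ofReal (2 * π))⁻¹ := by
    have h := gaussianReal_prod_cone MeasurableSet.univ MeasurableSet.univ
      fun _ _ _ => iff_of_true (mem_univ _) (mem_univ _)
    rw [measure_univ, univ_inter, volume_Ioo, sub_neg_eq_add, ← two_mul] at h
    exact ENNReal.eq_inv_of_mul_eq_one_left h.symm
  have hcone : ∀ r > 0, ∀ θ, (r * cos θ, r * sin θ) ∈ planarWedge φ ↔
      θ ∈ {θ | 0 ≤ cos θ ∧ 0 ≤ cos (θ - φ)} := by
    intro r hr θ
    have hrot : cos φ * (r * cos θ) + sin φ * (r * sin θ) = r * cos (θ - φ) := by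
      rw [cos_sub]; ring
    simp only [planarWedge, mem_ofPred_eq, hrot, mul_nonneg_iff_of_pos_left hr]
  rw [gaussianReal_prod_cone (measurableSet_planarWedge φ) (by measurability) hcone,
    volume_planarWedge_angles hφ0 hφπ, hR, ← ENNReal.ofReal_inv_of_pos (by positivity),
    ← ENNReal.ofReal_mul (by positivity)]
  congr 1
  field_simp

lemma map_stdGaussian_euclideanSpace_fin_two :
    (ProbabilityTheory.stdGaussian (EuclideanSpace ℝ (Fin 2))).map (fun p => (p 0, p 1)) =
      (gaussianReal 0 1).prod (gaussianReal 0 1) := by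
  rw [← map_pi_eq_stdGaussian, Measure.map_map (by fun_prop) (by fun_prop)]
  exact (measurePreserving_finTwoArrow _).map_eq

section Wedge

variable {E : Type*} [NormedAddCommGroup E] [InnerProductSpace ℝ E] [FiniteDimensional ℝ E]
  [MeasurableSpace E] [BorelSpace E]

theorem stdGaussian_wedge {x y : E} (hx : x ≠ 0) (hy : y ≠ 0) :
    ProbabilityTheory.stdGaussian E {ω | 0 ≤ ⟪ω, x⟫ ∧ 0 ≤ ⟪ω, y⟫} =
      ENNReal.ofReal (1 / 2 - angle x y / (2 * π)) := by
  set φ := angle x y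
  -- `u', v'` have the Gram matrix of `x, y`.
  let u' : EuclideanSpace ℝ (Fin 2) := !₂[‖x‖, 0]
  let v' : EuclideanSpace ℝ (Fin 2) := !₂[‖y‖ * cos φ, ‖y‖ * sin φ]
  have hinner : ∀ a b : ℝ, ∀ p : EuclideanSpace ℝ (Fin 2), ⟪!₂[a, b], p⟫ = a * p 0 + b * p 1 := by
    intro a b p
    simp only [PiLp.inner_apply, RCLike.inner_apply, ringHom_apply, Fin.sum_univ_two,
      Matrix.cons_val_zero, Matrix.cons_val_one]
    ring
  have hu : ‖x‖ = ‖u'‖ := by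
    simp [u', EuclideanSpace.norm_eq, Fin.sum_univ_two]
  have hv : ‖y‖ = ‖v'‖ := by
    simp only [v', EuclideanSpace.norm_eq, norm_eq_abs, sq_abs, Fin.sum_univ_two,
      Matrix.cons_val_zero, Matrix.cons_val_one, mul_pow]
    rw [← mul_add, cos_sq_add_sin_sq, mul_one, sqrt_sq (norm_nonneg y)]
  have huv : ⟪x, y⟫ = ⟪u', v'⟫ := by
    rw [hinner, ← cos_angle_mul_norm_mul_norm]
    simp only [v', Matrix.cons_val_zero, Matrix.cons_val_one, zero_mul, add_zero]
    ring
  have hquadrant : MeasurableSet (Ici (0 : ℝ) ×ˢ Ici (0 : ℝ)) :=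
    measurableSet_Ici.prod measurableSet_Ici
  have hwedge : {ω | 0 ≤ ⟪ω, x⟫ ∧ 0 ≤ ⟪ω, y⟫} = innerPair x y ⁻¹' (Ici 0 ×ˢ Ici 0) := by
    ext ω; simp [real_inner_comm]
  have hplane :
      innerPair u' v' ⁻¹' (Ici 0 ×ˢ Ici 0) = (fun p => (p 0, p 1)) ⁻¹' planarWedge φ := by
    ext p
    have hrot : ‖y‖ * cos φ * p 0 + ‖y‖ * sin φ * p 1 = ‖y‖ * (cos φ * p 0 + sin φ * p 1) := by
      ring
    simp only [u', v', mem_preimage, innerPair_apply, hinner, mem_prod, mem_Ici, zero_mul,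
      add_zero, hrot, planarWedge, mem_ofPred_eq, mul_nonneg_iff_of_pos_left (norm_pos_iff.2 hx),
      mul_nonneg_iff_of_pos_left (norm_pos_iff.2 hy)]
  rw [hwedge, ← Measure.map_apply (by fun_prop) hquadrant, map_innerPair_stdGaussian hu hv huv,
    Measure.map_apply (by fun_prop) hquadrant, hplane,
    ← Measure.map_apply (by fun_prop) (measurableSet_planarWedge φ),
    map_stdGaussian_euclideanSpace_fin_two,
    gaussianReal_prod_planarWedge (angle_nonneg x y) (angle_le_pi x y)]

end Wedge

lemma stdGaussian_eq_map_ofLp (D : ℕ) :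
    stdGaussian D =
      (ProbabilityTheory.stdGaussian (EuclideanSpace ℝ (Fin D))).map (WithLp.ofLp (p := 2)) := by
  rw [← map_pi_eq_stdGaussian, Measure.map_map (WithLp.measurable_ofLp 2 _)
    (WithLp.measurable_toLp 2 _)]
  exact Measure.map_id.symm

instance (D : ℕ) : IsProbabilityMeasure (stdGaussian D) := by
  rw [stdGaussian_eq_map_ofLp]
  exact Measure.isProbabilityMeasure_map (WithLp.measurable_ofLp 2 _).aemeasurable

lemma dotp_eq_inner {D : ℕ} (x y : Fin D → ℝ) : dotp x y = ⟪toLp 2 x, toLp 2 y⟫ := by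
  simp [dotp, PiLp.inner_apply, mul_comm]

lemma nrm_eq_norm {D : ℕ} (x : Fin D → ℝ) : nrm x = ‖toLp 2 x‖ := by
  rw [nrm, dotp_eq_inner, real_inner_self_eq_norm_sq, sqrt_sq (norm_nonneg _)]

lemma angleφ_eq_angle {D : ℕ} (x y : Fin D → ℝ) : angleφ x y = angle (toLp 2 x) (toLp 2 y) := by
  rw [angleφ, dotp_eq_inner, nrm_eq_norm, nrm_eq_norm, angle]

lemma measurable_dotp_left {D : ℕ} (x : Fin D → ℝ) : Measurable fun ω : Fin D → ℝ => dotp ω x := by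
  unfold dotp
  fun_prop

lemma measurableSet_dotp_wedge {D : ℕ} (x y : Fin D → ℝ) :
    MeasurableSet {ω | 0 ≤ dotp ω x ∧ 0 ≤ dotp ω y} :=
  (measurableSet_le measurable_const (measurable_dotp_left x)).inter
    (measurableSet_le measurable_const (measurable_dotp_left y))

lemma stdGaussian_dotp_wedge {D : ℕ} {x y : Fin D → ℝ} (hx : x ≠ 0) (hy : y ≠ 0) :
    stdGaussian D {ω | 0 ≤ dotp ω x ∧ 0 ≤ dotp ω y} =
      ENNReal.ofReal (1 / 2 - angleφ x y / (2 * π)) := by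
  rw [stdGaussian_eq_map_ofLp, Measure.map_apply (WithLp.measurable_ofLp 2 _)
    (measurableSet_dotp_wedge x y)]
  simp only [preimage_ofPred_eq, dotp_eq_inner, WithLp.toLp_ofLp]
  rw [stdGaussian_wedge (by simpa using hx) (by simpa using hy), angleφ_eq_angle]

lemma signFeat_mul_signFeat {D P : ℕ} (ω : Fin P → Fin D → ℝ) (x y : Fin D → ℝ) (ℓ : Fin P) :
    signFeat ω x ℓ * signFeat ω y ℓ =
      {w | 0 ≤ dotp w x ∧ 0 ≤ dotp w y}.indicator 1 (ω ℓ) := by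
  by_cases hx : 0 ≤ dotp (ω ℓ) x <;> by_cases hy : 0 ≤ dotp (ω ℓ) y <;>
    simp [signFeat, hx, hy]

lemma integral_sum_comp_eval {ι α : Type*} [Fintype ι] [MeasurableSpace α] {μ : Measure α}
    [IsProbabilityMeasure μ] {f : α → ℝ} (hf : Integrable f μ) :
    ∫ ω, ∑ i, f (ω i) ∂Measure.pi (fun _ : ι => μ) = Fintype.card ι * ∫ a, f a ∂μ := by
  rw [integral_finsetSum _ fun i _ => integrable_comp_eval hf]
  simp only [integral_comp_eval (μ := fun _ => μ) hf.aestronglyMeasurable, Finset.sum_const,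
    Finset.card_univ, nsmul_eq_mul]

lemma integrable_indicator_dotp_wedge {D : ℕ} (x y : Fin D → ℝ) :
    Integrable ({ω | 0 ≤ dotp ω x ∧ 0 ≤ dotp ω y}.indicator (1 : (Fin D → ℝ) → ℝ))
      (stdGaussian D) :=
  (integrable_const 1).indicator (measurableSet_dotp_wedge x y)

lemma integrable_sum_signFeat_mul {D : ℕ} (x y : Fin D → ℝ) (P : ℕ) :
    Integrable (fun ω => ∑ ℓ, signFeat ω x ℓ * signFeat ω y ℓ)
      (Measure.pi fun _ : Fin P => stdGaussian D) := by
  simp only [signFeat_mul_signFeat]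
  exact integrable_finsetSum _ fun ℓ _ =>
    integrable_comp_eval (integrable_indicator_dotp_wedge x y)

lemma integral_sum_signFeat_mul {D : ℕ} {x y : Fin D → ℝ} (hx : x ≠ 0) (hy : y ≠ 0) (P : ℕ) :
    ∫ ω, (∑ ℓ, signFeat ω x ℓ * signFeat ω y ℓ) ∂(Measure.pi fun _ : Fin P => stdGaussian D) =
      P * (1 / 2 - angleφ x y / (2 * π)) := by
  have hp_nonneg : 0 ≤ 1 / 2 - angleφ x y / (2 * π) := by
    have := angleφ_eq_angle x y ▸ angle_le_pi (toLp 2 x) (toLp 2 y)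
    rw [sub_nonneg, div_le_iff₀ (by positivity)]
    linarith
  simp only [signFeat_mul_signFeat]
  rw [integral_sum_comp_eval (integrable_indicator_dotp_wedge x y), integral_indicator_one (measurableSet_dotp_wedge x y), measureReal_def,
    stdGaussian_dotp_wedge hx hy, ENNReal.toReal_ofReal hp_nonneg, Fintype.card_fin]

theorem stmt_6_general {D : ℕ} (x y : Fin D → ℝ) (hx : x ≠ 0) (hy : y ≠ 0) :
    stdGaussian D {ω | 0 ≤ dotp ω x ∧ 0 ≤ dotp ω y} =
      ENNReal.ofReal (1 / 2 - angleφ x y / (2 * Real.pi)) ∧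
    ∀ P : ℕ, 1 ≤ P →
      (∫ ω, (∑ ℓ, signFeat ω x ℓ * signFeat ω y ℓ)
          ∂(Measure.pi fun _ : Fin P => stdGaussian D)) =
        P * (1 / 2 - angleφ x y / (2 * Real.pi)) ∧
      (∫ ω, Real.pi * (1 - (2 / (P : ℝ)) * ∑ ℓ, signFeat ω x ℓ * signFeat ω y ℓ)
          ∂(Measure.pi fun _ : Fin P => stdGaussian D)) =
        angleφ x y := by
  refine ⟨stdGaussian_dotp_wedge hx hy, fun P hP => ⟨integral_sum_signFeat_mul hx hy P, ?_⟩⟩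
  have hP0 : (P : ℝ) ≠ 0 := Nat.cast_ne_zero.2 (by omega)
  rw [integral_const_mul, integral_sub (integrable_const 1)
      ((integrable_sum_signFeat_mul x y P).const_mul _), integral_const, integral_const_mul,
    integral_sum_signFeat_mul hx hy P]
  simp only [probReal_univ, one_smul]
  field_simp
  ring

/-- Random-hyperplane identity: for a standard Gaussian `ω` in `ℝ^D`,
`ℙ(⟨ω,x⟩ ≥ 0 ∧ ⟨ω,y⟩ ≥ 0) = 1/2 − φ(x,y)/(2π)`; consequently, for `P` i.i.d. standard
Gaussian directions, `E⟨a(x),a(y)⟩ = P(1/2 − φ/(2π))` and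
`E[π(1 − (2/P)⟨a(x),a(y)⟩)] = φ(x,y)`. -/
theorem stmt_6 {D : ℕ} (hD : 1 ≤ D) (x y : Fin D → ℝ) (hx : x ≠ 0) (hy : y ≠ 0) :
    stdGaussian D {ω | 0 ≤ dotp ω x ∧ 0 ≤ dotp ω y} =
      ENNReal.ofReal (1 / 2 - angleφ x y / (2 * Real.pi)) ∧
    ∀ P : ℕ, 1 ≤ P →
      (∫ ω, (∑ ℓ, signFeat ω x ℓ * signFeat ω y ℓ)
          ∂(Measure.pi fun _ : Fin P => stdGaussian D)) =
        P * (1 / 2 - angleφ x y / (2 * Real.pi)) ∧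
      (∫ ω, Real.pi * (1 - (2 / (P : ℝ)) * ∑ ℓ, signFeat ω x ℓ * signFeat ω y ℓ)
          ∂(Measure.pi fun _ : Fin P => stdGaussian D)) =
        angleφ x y :=
  stmt_6_general x y hx hy
end

section
/- In the decentralized dual EOT setting below, fix B ≥ 0 and let 𝒟_B be the set of (u,v) all of whose coordinates lie in [−B,B]. Then for all pairs of kernel block collections K = (K_{ij}) and K' = (K'_{ij}): | sup_{(u,v)∈𝒟_B} F_ε(u,v;K,E) − sup_{(u,v)∈𝒟_B} F_ε(u,v;K',E) | ≤ ε·exp(2B/ε)·Σ_{i=1}^I Σ_{j=1}^J (e_{ij}/(N_i M_j)) Σ_{n=1}^{N_i} Σ_{m=1}^{M_j} |(K_{ij})_{nm} − (K'_{ij})_{nm}|. -/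
/-- The decentralized dual entropic OT objective. -/
noncomputable def Feps {I J : ℕ} {N : Fin I → ℕ} {M : Fin J → ℕ} (ε : ℝ)
    (K : ∀ i j, Matrix (Fin (N i)) (Fin (M j)) ℝ) (E : Fin I → Fin J → ℝ)
    (u : ∀ i, Fin (N i) → ℝ) (v : ∀ j, Fin (M j) → ℝ) : ℝ :=
  ∑ i, ∑ j, (E i j / ((N i : ℝ) * (M j : ℝ))) *
    ∑ n, ∑ m, (u i n + v j m - ε * Real.exp ((u i n + v j m) / ε) * K i j n m)

/-- The box `𝒟_B` of dual variables all of whose coordinates lie in `[-B, B]`. -/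
def dualBox {I J : ℕ} (N : Fin I → ℕ) (M : Fin J → ℕ) (B : ℝ) :
    Set ((∀ i, Fin (N i) → ℝ) × (∀ j, Fin (M j) → ℝ)) :=
  {uv | (∀ i n, uv.1 i n ∈ Set.Icc (-B) B) ∧ ∀ j m, uv.2 j m ∈ Set.Icc (-B) B}

lemma dualBox_eq {I J : ℕ} (N : Fin I → ℕ) (M : Fin J → ℕ) (B : ℝ) :
    dualBox N M B =
      (Set.univ.pi fun i => Set.univ.pi fun _ : Fin (N i) => Set.Icc (-B) B) ×ˢ
      (Set.univ.pi fun j => Set.univ.pi fun _ : Fin (M j) => Set.Icc (-B) B) := by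
  ext ⟨u, v⟩
  simp only [dualBox, Set.mem_setOf_eq, Set.mem_prod, Set.mem_pi, Set.mem_univ, true_implies]

lemma dualBox_compact {I J : ℕ} (N : Fin I → ℕ) (M : Fin J → ℕ) (B : ℝ) :
    IsCompact (dualBox N M B) := by
  rw [dualBox_eq]
  exact (isCompact_univ_pi fun i => isCompact_univ_pi fun _ => isCompact_Icc).prod
    (isCompact_univ_pi fun j => isCompact_univ_pi fun _ => isCompact_Icc)

lemma Feps_continuous {I J : ℕ} {N : Fin I → ℕ} {M : Fin J → ℕ} (ε : ℝ)
    (K : ∀ i j, Matrix (Fin (N i)) (Fin (M j)) ℝ) (E : Fin I → Fin J → ℝ) :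
    Continuous fun uv : (∀ i, Fin (N i) → ℝ) × (∀ j, Fin (M j) → ℝ) =>
      Feps ε K E uv.1 uv.2 := by
  unfold Feps
  fun_prop

lemma pointwise_bound {I J : ℕ} {N : Fin I → ℕ} {M : Fin J → ℕ} (ε : ℝ) (hε : 0 < ε)
    (E : Fin I → Fin J → ℝ) (hE : ∀ i j, 0 ≤ E i j) (B : ℝ)
    (K K' : ∀ i j, Matrix (Fin (N i)) (Fin (M j)) ℝ)
    (u : ∀ i, Fin (N i) → ℝ) (v : ∀ j, Fin (M j) → ℝ)
    (hu : ∀ i n, u i n ∈ Set.Icc (-B) B) (hv : ∀ j m, v j m ∈ Set.Icc (-B) B) :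
    Feps ε K E u v - Feps ε K' E u v ≤
      ε * Real.exp (2 * B / ε) *
        ∑ i, ∑ j, (E i j / ((N i : ℝ) * (M j : ℝ))) *
          ∑ n, ∑ m, |K i j n m - K' i j n m| := by
  have hRHS : ε * Real.exp (2 * B / ε) *
      ∑ i, ∑ j, (E i j / ((N i : ℝ) * (M j : ℝ))) *
        ∑ n, ∑ m, |K i j n m - K' i j n m|
      = ∑ i, ∑ j, (E i j / ((N i : ℝ) * (M j : ℝ))) *
        ∑ n, ∑ m, ε * Real.exp (2 * B / ε) * |K i j n m - K' i j n m| := by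
    simp only [Finset.mul_sum]
    refine Finset.sum_congr rfl fun i _ => Finset.sum_congr rfl fun j _ =>
      Finset.sum_congr rfl fun n _ => Finset.sum_congr rfl fun m _ => by ring
  rw [hRHS]
  unfold Feps
  rw [← Finset.sum_sub_distrib]
  refine Finset.sum_le_sum fun i _ => ?_
  rw [← Finset.sum_sub_distrib]
  refine Finset.sum_le_sum fun j _ => ?_
  rw [← mul_sub]
  have hc : 0 ≤ E i j / ((N i : ℝ) * (M j : ℝ)) :=
    div_nonneg (hE i j) (by positivity)
  refine mul_le_mul_of_nonneg_left ?_ hc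
  rw [← Finset.sum_sub_distrib]
  refine Finset.sum_le_sum fun n _ => ?_
  rw [← Finset.sum_sub_distrib]
  refine Finset.sum_le_sum fun m _ => ?_
  have h1 : u i n + v j m - ε * Real.exp ((u i n + v j m) / ε) * K i j n m -
      (u i n + v j m - ε * Real.exp ((u i n + v j m) / ε) * K' i j n m)
      = ε * Real.exp ((u i n + v j m) / ε) * (K' i j n m - K i j n m) := by ring
  rw [h1]
  have hexp : Real.exp ((u i n + v j m) / ε) ≤ Real.exp (2 * B / ε) := by
    have h2 := (hu i n).2
    have h3 := (hv j m).2
    have : u i n + v j m ≤ 2 * B := by linarith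
    apply Real.exp_le_exp.2
    gcongr
  calc ε * Real.exp ((u i n + v j m) / ε) * (K' i j n m - K i j n m)
      ≤ ε * Real.exp ((u i n + v j m) / ε) * |K i j n m - K' i j n m| := by
        refine mul_le_mul_of_nonneg_left ?_ (by positivity)
        rw [abs_sub_comm]
        exact le_abs_self _
    _ ≤ ε * Real.exp (2 * B / ε) * |K i j n m - K' i j n m| := by
        refine mul_le_mul_of_nonneg_right ?_ (abs_nonneg _)
        exact mul_le_mul_of_nonneg_left hexp hε.le

/-- The optimal dual EOT value over a box of dual variables is
Lipschitz in the kernel blocks, with constant `ε exp(2B/ε)` against the weighted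
entrywise `ℓ¹` distance of the kernels. -/
theorem stmt_14 {I J : ℕ} {N : Fin I → ℕ} {M : Fin J → ℕ} (ε : ℝ) (hε : 0 < ε)
    (E : Fin I → Fin J → ℝ) (hE : ∀ i j, 0 ≤ E i j)
    (B : ℝ) (hB : 0 ≤ B)
    (K K' : ∀ i j, Matrix (Fin (N i)) (Fin (M j)) ℝ) :
    |sSup ((fun uv => Feps ε K E uv.1 uv.2) '' dualBox N M B) -
      sSup ((fun uv => Feps ε K' E uv.1 uv.2) '' dualBox N M B)| ≤
      ε * Real.exp (2 * B / ε) *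
        ∑ i, ∑ j, (E i j / ((N i : ℝ) * (M j : ℝ))) *
          ∑ n, ∑ m, |K i j n m - K' i j n m| := by
  have hbox_ne : (dualBox N M B).Nonempty :=
    ⟨⟨fun _ _ => 0, fun _ _ => 0⟩,
      ⟨fun _ _ => Set.mem_Icc.2 ⟨neg_nonpos.2 hB, hB⟩,
        fun _ _ => Set.mem_Icc.2 ⟨neg_nonpos.2 hB, hB⟩⟩⟩
  have hcomp := dualBox_compact N M B
  have hbdd : ∀ L : ∀ i j, Matrix (Fin (N i)) (Fin (M j)) ℝ,
      BddAbove ((fun uv => Feps ε L E uv.1 uv.2) '' dualBox N M B) := fun L =>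
    (hcomp.image (Feps_continuous ε L E)).bddAbove
  have hsym : (∑ i, ∑ j, (E i j / ((N i : ℝ) * (M j : ℝ))) *
        ∑ n, ∑ m, |K' i j n m - K i j n m|)
      = ∑ i, ∑ j, (E i j / ((N i : ℝ) * (M j : ℝ))) *
        ∑ n, ∑ m, |K i j n m - K' i j n m| := by
    simp [abs_sub_comm]
  have key : ∀ L L' : ∀ i j, Matrix (Fin (N i)) (Fin (M j)) ℝ,
      sSup ((fun uv => Feps ε L E uv.1 uv.2) '' dualBox N M B) ≤
        ε * Real.exp (2 * B / ε) *
          (∑ i, ∑ j, (E i j / ((N i : ℝ) * (M j : ℝ))) *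
            ∑ n, ∑ m, |L i j n m - L' i j n m|) +
        sSup ((fun uv => Feps ε L' E uv.1 uv.2) '' dualBox N M B) := by
    intro L L'
    refine csSup_le (hbox_ne.image _) ?_
    rintro x ⟨⟨u, v⟩, huv, rfl⟩
    have h1 := pointwise_bound ε hε E hE B L L' u v huv.1 huv.2
    have h2 : Feps ε L' E u v ≤
        sSup ((fun uv => Feps ε L' E uv.1 uv.2) '' dualBox N M B) :=
      le_csSup (hbdd L') ⟨⟨u, v⟩, huv, rfl⟩
    simp only
    linarith
  rw [abs_sub_le_iff]
  constructor
  · have := key K K'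
    linarith
  · have := key K' K
    rw [hsym] at this
    linarith
end

section
/- Let N, M be positive integers, ε > 0, C ∈ ℝ^{N×M}, and let μ ∈ ℝ^N, γ ∈ ℝ^M have strictly positive entries with Σ_{n=1}^N μ_n = 1 and Σ_{m=1}^M γ_m = 1. Let Π(μ,γ) = { π ∈ ℝ_{≥0}^{N×M} : Σ_m π_{nm} = μ_n for all n, Σ_n π_{nm} = γ_m for all m }. Then, with the convention 0·log 0 = 0, the minimum over π ∈ Π(μ,γ) of Σ_{n,m} C_{nm} π_{nm} + ε·Σ_{n,m} π_{nm}( log( π_{nm}/(μ_n γ_m) ) − 1 ) is attained, and it equals sup_{u ∈ ℝ^N, v ∈ ℝ^M} [ Σ_n u_n μ_n + Σ_m v_m γ_m − ε·Σ_{n,m} μ_n γ_m · exp( (u_n + v_m − C_{nm})/ε ) ]. -/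
/-!
The transport polytope is compact and the cost continuous, so a minimiser `π` exists. Every
entry of `π` is positive: `x ↦ x log x` has slope `-∞` at `0`, so shifting a little mass towards
`μ ⊗ γ` would lower the cost. The first-order conditions along the zero-marginal directions then
make the gradient `C + ε log (π / (μ ⊗ γ))` additively separable, `u n + v m`, i.e. `π` is the
Gibbs plan `μ n γ m exp ((u n + v m - C n m) / ε)`. Finally, for any plan and any potentials,
cost minus dual is `ε` times a sum of Fenchel–Young gaps `x (log (x / b) - 1) + b eˢ - x s ≥ 0`,
which vanish at `x = b eˢ`; so the dual never exceeds the cost and attains it at `(u, v)`.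
-/

open Finset Topology
open Real (log exp)

theorem mul_log_div_sub_one_eq {b : ℝ} (hb : b ≠ 0) (x : ℝ) :
    x * (log (x / b) - 1) = x * log x - x * (log b + 1) := by
  rcases eq_or_ne x 0 with rfl | hx
  · simp
  · rw [Real.log_div hx hb]; ring

theorem continuous_mul_log_div_sub_one {b : ℝ} (hb : b ≠ 0) :
    Continuous fun x => x * (log (x / b) - 1) := by
  simp only [mul_log_div_sub_one_eq hb]
  fun_prop

theorem mul_le_mul_log_div_sub_one_add_mul_exp {x b : ℝ} (hx : 0 ≤ x) (hb : 0 < b) (s : ℝ) :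
    x * s ≤ x * (log (x / b) - 1) + b * exp s := by
  rcases hx.eq_or_lt with rfl | hx
  · simp only [zero_mul, zero_add]; positivity
  have h := Real.log_le_sub_one_of_pos (show 0 < b * exp s / x by positivity)
  rw [Real.log_div (by positivity) hx.ne', Real.log_mul hb.ne' (Real.exp_pos s).ne',
    Real.log_exp] at h
  rw [Real.log_div hx.ne' hb.ne']
  have := mul_le_mul_of_nonneg_left h hx.le
  rw [mul_sub_one, mul_div_cancel₀ _ hx.ne'] at this
  linarith

theorem mul_log_div_sub_one_add_mul_exp_eq {b : ℝ} (hb : b ≠ 0) (s : ℝ) :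
    b * exp s * (log (b * exp s / b) - 1) + b * exp s = b * exp s * s := by
  rw [mul_div_cancel_left₀ _ hb, Real.log_exp]; ring

theorem mul_log_div_sub_one_segment_le {x b t : ℝ} (hx : 0 ≤ x) (hb : 0 < b) (ht0 : 0 < t)
    (ht1 : t ≤ 1) :
    ((1 - t) * x + t * b) * (log (((1 - t) * x + t * b) / b) - 1) ≤
      (1 - t) * (x * (log (x / b) - 1)) + t * (b * (log (b / b) - 1)) +
        t * log t * if x = 0 then b else 0 := by
  rcases hx.eq_or_lt with rfl | hx
  · rw [if_pos rfl, mul_zero, zero_add, mul_div_cancel_right₀ _ hb.ne', div_self hb.ne',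
      Real.log_one]
    exact le_of_eq (by ring)
  · have hconv := Real.convexOn_mul_log.2 (Set.mem_Ici.2 hx.le) (Set.mem_Ici.2 hb.le)
      (by linarith : 0 ≤ 1 - t) ht0.le (by ring)
    simp only [smul_eq_mul] at hconv
    simp only [mul_log_div_sub_one_eq hb.ne', if_neg hx.ne']
    nlinarith [hconv]

theorem hasDerivAt_mul_log_div_sub_one {x b : ℝ} (hx : x ≠ 0) (hb : b ≠ 0) :
    HasDerivAt (fun y => y * (log (y / b) - 1)) (log (x / b)) x := by
  simp only [mul_log_div_sub_one_eq hb]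
  refine ((Real.hasDerivAt_mul_log hx).sub ((hasDerivAt_id' x).mul_const (log b + 1))).congr_deriv
    ?_
  rw [Real.log_div hx hb]
  ring

variable {ι κ : Type*} [Fintype ι] [Fintype κ]

def transportPlans (μ : ι → ℝ) (γ : κ → ℝ) : Set (ι → κ → ℝ) :=
  {π | (∀ n m, 0 ≤ π n m) ∧ (∀ n, ∑ m, π n m = μ n) ∧ (∀ m, ∑ n, π n m = γ m)}

noncomputable def entropicCost (C : Matrix ι κ ℝ) (ε : ℝ) (μ : ι → ℝ) (γ : κ → ℝ)
    (π : ι → κ → ℝ) : ℝ :=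
  (∑ n, ∑ m, C n m * π n m) + ε * ∑ n, ∑ m, π n m * (log (π n m / (μ n * γ m)) - 1)

noncomputable def entropicDual (C : Matrix ι κ ℝ) (ε : ℝ) (μ : ι → ℝ) (γ : κ → ℝ)
    (u : ι → ℝ) (v : κ → ℝ) : ℝ :=
  (∑ n, u n * μ n) + (∑ m, v m * γ m) -
    ε * ∑ n, ∑ m, μ n * γ m * exp ((u n + v m - C n m) / ε)

variable {C : Matrix ι κ ℝ} {ε : ℝ} {μ : ι → ℝ} {γ : κ → ℝ}

theorem convex_transportPlans : Convex ℝ (transportPlans μ γ) := by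
  rintro p ⟨hp0, hprow, hpcol⟩ q ⟨hq0, hqrow, hqcol⟩ a b ha hb hab
  refine ⟨fun n m => ?_, fun n => ?_, fun m => ?_⟩
  · simp only [Pi.add_apply, Pi.smul_apply, smul_eq_mul]
    exact add_nonneg (mul_nonneg ha (hp0 n m)) (mul_nonneg hb (hq0 n m))
  · simp only [Pi.add_apply, Pi.smul_apply, smul_eq_mul, sum_add_distrib, ← mul_sum, hprow,
      hqrow, ← add_mul, hab, one_mul]
  · simp only [Pi.add_apply, Pi.smul_apply, smul_eq_mul, sum_add_distrib, ← mul_sum, hpcol,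
      hqcol, ← add_mul, hab, one_mul]

theorem isCompact_transportPlans : IsCompact (transportPlans μ γ) := by
  have hclosed : IsClosed (transportPlans μ γ) := by
    simp only [transportPlans, Set.ofPred_and, Set.ofPred_forall]
    refine .inter ?_ (.inter ?_ ?_)
    · exact isClosed_iInter fun n => isClosed_iInter fun m =>
        isClosed_le continuous_const (by fun_prop)
    · exact isClosed_iInter fun n => isClosed_eq (by fun_prop) (by fun_prop)
    · exact isClosed_iInter fun m => isClosed_eq (by fun_prop) (by fun_prop)
  refine (isCompact_Icc (a := 0) (b := fun n _ => μ n)).of_isClosed_subset hclosed ?_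
  rintro p ⟨hp0, hprow, -⟩
  refine ⟨fun n m => hp0 n m, fun n m => ?_⟩
  change p n m ≤ μ n
  rw [← hprow n]
  exact single_le_sum (fun m _ => hp0 n m) (mem_univ m)

theorem outerProduct_mem_transportPlans (hμ : ∀ n, 0 ≤ μ n) (hγ : ∀ m, 0 ≤ γ m)
    (hμ1 : ∑ n, μ n = 1) (hγ1 : ∑ m, γ m = 1) :
    (fun n m => μ n * γ m) ∈ transportPlans μ γ :=
  ⟨fun n m => mul_nonneg (hμ n) (hγ m), fun n => by rw [← mul_sum, hγ1, mul_one],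
    fun m => by rw [← sum_mul, hμ1, one_mul]⟩

theorem continuous_entropicCost (hμ : ∀ n, μ n ≠ 0) (hγ : ∀ m, γ m ≠ 0) :
    Continuous (entropicCost C ε μ γ) := by
  refine (continuous_finsetSum _ fun n _ => continuous_finsetSum _ fun m _ => by fun_prop).add
    (continuous_const.mul (continuous_finsetSum _ fun n _ => continuous_finsetSum _ fun m _ =>
      (continuous_mul_log_div_sub_one (mul_ne_zero (hμ n) (hγ m))).comp (by fun_prop)))

theorem exists_isMinOn_entropicCost (hμ : ∀ n, 0 < μ n) (hγ : ∀ m, 0 < γ m)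
    (hμ1 : ∑ n, μ n = 1) (hγ1 : ∑ m, γ m = 1) :
    ∃ π ∈ transportPlans μ γ, IsMinOn (entropicCost C ε μ γ) (transportPlans μ γ) π :=
  isCompact_transportPlans.exists_isMinOn
    ⟨_, outerProduct_mem_transportPlans (fun n => (hμ n).le) (fun m => (hγ m).le) hμ1 hγ1⟩
    (continuous_entropicCost (fun n => (hμ n).ne') (fun m => (hγ m).ne')).continuousOn

theorem entropicCost_eq_sum (π : ι → κ → ℝ) :
    entropicCost C ε μ γ π =
      ∑ n, ∑ m, (C n m * π n m + ε * (π n m * (log (π n m / (μ n * γ m)) - 1))) := by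
  simp only [entropicCost, mul_sum, sum_add_distrib]

theorem entropicCost_sub_entropicDual (hε : ε ≠ 0) {π : ι → κ → ℝ}
    (hπ : π ∈ transportPlans μ γ) (u : ι → ℝ) (v : κ → ℝ) :
    entropicCost C ε μ γ π - entropicDual C ε μ γ u v =
      ε * ∑ n, ∑ m, (π n m * (log (π n m / (μ n * γ m)) - 1) +
        μ n * γ m * exp ((u n + v m - C n m) / ε) - π n m * ((u n + v m - C n m) / ε)) := by
  obtain ⟨-, hrow, hcol⟩ := hπ
  have hu : ∑ n, u n * μ n = ∑ n, ∑ m, u n * π n m := by simp only [← mul_sum, hrow]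
  have hv : ∑ m, v m * γ m = ∑ n, ∑ m, v m * π n m := by
    rw [sum_comm]; simp only [← mul_sum, hcol]
  rw [entropicCost_eq_sum, entropicDual, hu, hv]
  simp only [mul_sum, ← sum_add_distrib, ← sum_sub_distrib]
  refine sum_congr rfl fun n _ => sum_congr rfl fun m _ => ?_
  field_simp
  ring

theorem entropicDual_le_entropicCost (hε : 0 < ε) (hμ : ∀ n, 0 < μ n) (hγ : ∀ m, 0 < γ m)
    {π : ι → κ → ℝ} (hπ : π ∈ transportPlans μ γ) (u : ι → ℝ) (v : κ → ℝ) :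
    entropicDual C ε μ γ u v ≤ entropicCost C ε μ γ π := by
  rw [← sub_nonneg, entropicCost_sub_entropicDual hε.ne' hπ]
  refine mul_nonneg hε.le (sum_nonneg fun n _ => sum_nonneg fun m _ => ?_)
  have := mul_le_mul_log_div_sub_one_add_mul_exp (hπ.1 n m) (mul_pos (hμ n) (hγ m))
    ((u n + v m - C n m) / ε)
  linarith

theorem entropicCost_eq_entropicDual (hε : ε ≠ 0) (hμ : ∀ n, μ n ≠ 0) (hγ : ∀ m, γ m ≠ 0)
    {π : ι → κ → ℝ} (hπ : π ∈ transportPlans μ γ) {u : ι → ℝ} {v : κ → ℝ}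
    (hgibbs : ∀ n m, π n m = μ n * γ m * exp ((u n + v m - C n m) / ε)) :
    entropicCost C ε μ γ π = entropicDual C ε μ γ u v := by
  rw [← sub_eq_zero, entropicCost_sub_entropicDual hε hπ]
  refine mul_eq_zero_of_right _ (sum_eq_zero fun n _ => sum_eq_zero fun m _ => ?_)
  rw [hgibbs, mul_log_div_sub_one_add_mul_exp_eq (mul_ne_zero (hμ n) (hγ m)), sub_self]

theorem pos_of_isMinOn_entropicCost (hε : 0 < ε) (hμ : ∀ n, 0 < μ n) (hγ : ∀ m, 0 < γ m)
    (hμ1 : ∑ n, μ n = 1) (hγ1 : ∑ m, γ m = 1) {π : ι → κ → ℝ} (hπ : π ∈ transportPlans μ γ)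
    (hmin : IsMinOn (entropicCost C ε μ γ) (transportPlans μ γ) π) (n : ι) (m : κ) :
    0 < π n m := by
  set F := entropicCost C ε μ γ
  have hb : ∀ n m, 0 < μ n * γ m := fun n m => mul_pos (hμ n) (hγ m)
  have hbπ := outerProduct_mem_transportPlans (fun n => (hμ n).le) (fun m => (hγ m).le) hμ1 hγ1
  refine (hπ.1 n m).lt_of_ne' fun hzero => ?_
  set Z := ∑ n, ∑ m, if π n m = 0 then μ n * γ m else 0
  have hZ_nonneg : ∀ n m, 0 ≤ if π n m = 0 then μ n * γ m else 0 := fun n m => by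
    split_ifs
    exacts [(hb n m).le, le_rfl]
  have hZ : 0 < Z := sum_pos' (fun n _ => sum_nonneg fun m _ => hZ_nonneg n m)
    ⟨n, mem_univ n, sum_pos' (fun m _ => hZ_nonneg n m) ⟨m, mem_univ m, by simp [hzero, hb]⟩⟩
  have hsegment : ∀ t ∈ Set.Ioc (0 : ℝ) 1,
      F ((1 - t) • π + t • fun n m => μ n * γ m) ≤
        (1 - t) * F π + t * F (fun n m => μ n * γ m) + ε * (t * log t) * Z := by
    rintro t ⟨ht0, ht1⟩
    simp only [F, Z, entropicCost_eq_sum, mul_sum, ← sum_add_distrib]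
    refine sum_le_sum fun n _ => sum_le_sum fun m _ => ?_
    have := mul_le_mul_of_nonneg_left
      (mul_log_div_sub_one_segment_le (hπ.1 n m) (hb n m) ht0 ht1) hε.le
    simp only [Pi.add_apply, Pi.smul_apply, smul_eq_mul]
    linarith
  -- the gain `ε Z t log t` on the zero entries beats the `O(t)` change of the rest as `t → 0⁺`
  obtain ⟨t, ht, hlog⟩ : ∃ t ∈ Set.Ioc (0 : ℝ) 1,
      log t < (F π - F (fun n m => μ n * γ m)) / (ε * Z) :=
    (Filter.Eventually.and (Ioc_mem_nhdsGT one_pos)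
      (Real.tendsto_log_nhdsGT_zero.eventually_lt_atBot _)).exists
  have hle : F π ≤ F _ :=
    hmin (convex_transportPlans hπ hbπ (sub_nonneg.2 ht.2) ht.1.le (by ring))
  have hslope : t * (F π - F (fun n m => μ n * γ m)) ≤ t * (log t * (ε * Z)) := by
    linarith [hsegment t ht]
  rw [lt_div_iff₀ (mul_pos hε hZ)] at hlog
  linarith [le_of_mul_le_mul_left hslope ht.1]

theorem hasDerivAt_entropicCost_add_smul (hμ : ∀ n, μ n ≠ 0) (hγ : ∀ m, γ m ≠ 0)
    {π : ι → κ → ℝ} (hπ : ∀ n m, 0 < π n m) (δ : ι → κ → ℝ) :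
    HasDerivAt (fun s : ℝ => entropicCost C ε μ γ (π + s • δ))
      (∑ n, ∑ m, δ n m * (C n m + ε * log (π n m / (μ n * γ m)))) 0 := by
  simp only [entropicCost_eq_sum, Pi.add_apply, Pi.smul_apply, smul_eq_mul]
  refine HasDerivAt.fun_sum fun n _ => HasDerivAt.fun_sum fun m _ => ?_
  have hline : HasDerivAt (fun s : ℝ => π n m + s * δ n m) (δ n m) 0 := by
    simpa using ((hasDerivAt_id (0 : ℝ)).mul_const (δ n m)).const_add (π n m)
  have hentropy := (hasDerivAt_mul_log_div_sub_one (hπ n m).ne'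
    (mul_ne_zero (hμ n) (hγ m))).comp_of_eq 0 hline (by simp)
  exact ((hline.const_mul (C n m)).add (hentropy.const_mul ε)).congr_deriv (by ring)

theorem sum_mul_gradient_eq_zero_of_isMinOn (hμ : ∀ n, μ n ≠ 0) (hγ : ∀ m, γ m ≠ 0)
    {π : ι → κ → ℝ} (hπ : π ∈ transportPlans μ γ) (hpos : ∀ n m, 0 < π n m)
    (hmin : IsMinOn (entropicCost C ε μ γ) (transportPlans μ γ) π) {δ : ι → κ → ℝ}
    (hrow : ∀ n, ∑ m, δ n m = 0) (hcol : ∀ m, ∑ n, δ n m = 0) :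
    ∑ n, ∑ m, δ n m * (C n m + ε * log (π n m / (μ n * γ m))) = 0 := by
  refine IsLocalMin.hasDerivAt_eq_zero ?_ (hasDerivAt_entropicCost_add_smul hμ hγ hpos δ)
  have hnonneg : ∀ᶠ s in 𝓝 (0 : ℝ), ∀ n m, 0 ≤ (π + s • δ) n m := by
    refine Filter.eventually_all.2 fun n => Filter.eventually_all.2 fun m => ?_
    have hcont : Continuous fun s : ℝ => (π + s • δ) n m := by
      simp only [Pi.add_apply, Pi.smul_apply, smul_eq_mul]
      fun_prop
    exact ((hcont.tendsto' 0 _ (by simp)).eventually_const_lt (hpos n m)).mono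
      fun s hs => hs.le
  filter_upwards [hnonneg] with s hs
  have hmem : π + s • δ ∈ transportPlans μ γ := by
    refine ⟨hs, fun n => ?_, fun m => ?_⟩ <;>
      simp only [Pi.add_apply, Pi.smul_apply, smul_eq_mul, sum_add_distrib, ← mul_sum, hrow,
        hcol, hπ.2.1, hπ.2.2, mul_zero, add_zero]
  simpa using hmin hmem

theorem exists_add_eq_of_sum_mul_eq_zero {g : ι → κ → ℝ}
    (h : ∀ δ : ι → κ → ℝ, (∀ n, ∑ m, δ n m = 0) → (∀ m, ∑ n, δ n m = 0) →
      ∑ n, ∑ m, δ n m * g n m = 0) :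
    ∃ (u : ι → ℝ) (v : κ → ℝ), ∀ n m, g n m = u n + v m := by
  classical
  rcases isEmpty_or_nonempty ι with hι | ⟨⟨n₀⟩⟩
  · exact ⟨0, 0, fun n => isEmptyElim n⟩
  rcases isEmpty_or_nonempty κ with hκ | ⟨⟨m₀⟩⟩
  · exact ⟨0, 0, fun _ m => isEmptyElim m⟩
  refine ⟨fun n => g n m₀ - g n₀ m₀, fun m => g n₀ m, fun n m => ?_⟩
  -- pairing `g` with `(eₙ - eₙ₀) ⊗ (eₘ - eₘ₀)` gives `g n m - g n m₀ - g n₀ m + g n₀ m₀ = 0`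
  have := h (fun i j => ((if i = n then 1 else 0) - (if i = n₀ then 1 else 0)) *
      ((if j = m then 1 else 0) - (if j = m₀ then 1 else 0)))
    (fun i => by simp [← mul_sum, sum_sub_distrib])
    (fun j => by simp [← sum_mul, sum_sub_distrib])
  simp only [mul_sub, mul_ite, mul_one, mul_zero, sub_mul, ite_mul, one_mul, zero_mul,
    sum_sub_distrib, sum_ite_eq', mem_univ, ↓reduceIte] at this
  linarith

theorem exists_eq_gibbs_of_isMinOn (hε : ε ≠ 0) (hμ : ∀ n, 0 < μ n) (hγ : ∀ m, 0 < γ m)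
    {π : ι → κ → ℝ} (hπ : π ∈ transportPlans μ γ) (hpos : ∀ n m, 0 < π n m)
    (hmin : IsMinOn (entropicCost C ε μ γ) (transportPlans μ γ) π) :
    ∃ (u : ι → ℝ) (v : κ → ℝ), ∀ n m, π n m = μ n * γ m * exp ((u n + v m - C n m) / ε) := by
  obtain ⟨u, v, huv⟩ := exists_add_eq_of_sum_mul_eq_zero fun δ hrow hcol =>
    sum_mul_gradient_eq_zero_of_isMinOn (fun n => (hμ n).ne') (fun m => (hγ m).ne') hπ hpos
      hmin hrow hcol
  refine ⟨u, v, fun n m => ?_⟩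
  have hb := mul_pos (hμ n) (hγ m)
  rw [← huv, add_sub_cancel_left, mul_div_cancel_left₀ _ hε,
    Real.exp_log (div_pos (hpos n m) hb), mul_div_cancel₀ _ hb.ne']

theorem stmt_15_general {N M : ℕ} (ε : ℝ) (hε : 0 < ε)
    (C : Matrix (Fin N) (Fin M) ℝ) (μ : Fin N → ℝ) (γ : Fin M → ℝ)
    (hμ : ∀ n, 0 < μ n) (hγ : ∀ m, 0 < γ m)
    (hμ1 : ∑ n, μ n = 1) (hγ1 : ∑ m, γ m = 1) :
    ∃ π : Fin N → Fin M → ℝ,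
      ((∀ n m, 0 ≤ π n m) ∧ (∀ n, ∑ m, π n m = μ n) ∧ (∀ m, ∑ n, π n m = γ m)) ∧
      (∀ π' : Fin N → Fin M → ℝ,
        (∀ n m, 0 ≤ π' n m) → (∀ n, ∑ m, π' n m = μ n) → (∀ m, ∑ n, π' n m = γ m) →
        (∑ n, ∑ m, C n m * π n m) +
            ε * ∑ n, ∑ m, π n m * (Real.log (π n m / (μ n * γ m)) - 1) ≤
          (∑ n, ∑ m, C n m * π' n m) +
            ε * ∑ n, ∑ m, π' n m * (Real.log (π' n m / (μ n * γ m)) - 1)) ∧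
      (∑ n, ∑ m, C n m * π n m) +
          ε * ∑ n, ∑ m, π n m * (Real.log (π n m / (μ n * γ m)) - 1) =
        sSup (Set.range fun uv : (Fin N → ℝ) × (Fin M → ℝ) =>
          (∑ n, uv.1 n * μ n) + (∑ m, uv.2 m * γ m) -
            ε * ∑ n, ∑ m, μ n * γ m * Real.exp ((uv.1 n + uv.2 m - C n m) / ε)) := by
  obtain ⟨π, hπ, hmin⟩ := exists_isMinOn_entropicCost (C := C) (ε := ε) hμ hγ hμ1 hγ1
  obtain ⟨u, v, hgibbs⟩ := exists_eq_gibbs_of_isMinOn hε.ne' hμ hγ hπ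
    (pos_of_isMinOn_entropicCost hε hμ hγ hμ1 hγ1 hπ hmin) hmin
  have hdual : entropicCost C ε μ γ π = entropicDual C ε μ γ u v :=
    entropicCost_eq_entropicDual hε.ne' (fun n => (hμ n).ne') (fun m => (hγ m).ne') hπ hgibbs
  refine ⟨π, hπ, fun π' h0 hrow hcol => hmin ⟨h0, hrow, hcol⟩, ?_⟩
  have hgreatest : IsGreatest (Set.range fun uv : (Fin N → ℝ) × (Fin M → ℝ) =>
      entropicDual C ε μ γ uv.1 uv.2) (entropicCost C ε μ γ π) := by
    refine ⟨⟨(u, v), hdual.symm⟩, ?_⟩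
    rintro _ ⟨uv, rfl⟩
    exact entropicDual_le_entropicCost hε hμ hγ hπ uv.1 uv.2
  exact hgreatest.csSup_eq.symm

/-- Finite-dimensional entropic optimal transport duality: the minimum
of the entropically regularized transport cost over the transport polytope `Π(μ,γ)` is
attained, and equals the supremum of the dual objective over all dual potentials. -/
theorem stmt_15 {N M : ℕ} (hN : 0 < N) (hM : 0 < M) (ε : ℝ) (hε : 0 < ε)
    (C : Matrix (Fin N) (Fin M) ℝ) (μ : Fin N → ℝ) (γ : Fin M → ℝ)
    (hμ : ∀ n, 0 < μ n) (hγ : ∀ m, 0 < γ m)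
    (hμ1 : ∑ n, μ n = 1) (hγ1 : ∑ m, γ m = 1) :
    ∃ π : Fin N → Fin M → ℝ,
      ((∀ n m, 0 ≤ π n m) ∧ (∀ n, ∑ m, π n m = μ n) ∧ (∀ m, ∑ n, π n m = γ m)) ∧
      (∀ π' : Fin N → Fin M → ℝ,
        (∀ n m, 0 ≤ π' n m) → (∀ n, ∑ m, π' n m = μ n) → (∀ m, ∑ n, π' n m = γ m) →
        (∑ n, ∑ m, C n m * π n m) +
            ε * ∑ n, ∑ m, π n m * (Real.log (π n m / (μ n * γ m)) - 1) ≤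
          (∑ n, ∑ m, C n m * π' n m) +
            ε * ∑ n, ∑ m, π' n m * (Real.log (π' n m / (μ n * γ m)) - 1)) ∧
      (∑ n, ∑ m, C n m * π n m) +
          ε * ∑ n, ∑ m, π n m * (Real.log (π n m / (μ n * γ m)) - 1) =
        sSup (Set.range fun uv : (Fin N → ℝ) × (Fin M → ℝ) =>
          (∑ n, uv.1 n * μ n) + (∑ m, uv.2 m * γ m) -
            ε * ∑ n, ∑ m, μ n * γ m * Real.exp ((uv.1 n + uv.2 m - C n m) / ε)) :=
  stmt_15_general ε hε C μ γ hμ hγ hμ1 hγ1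
end
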